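/- Duchi's mechanism satisfies ε-LDP: for ε > 0, the mechanism R_Duchi on inputs x ∈ [−1, 1] that outputs the value (e^ε + 1)/(e^ε − 1) with probability 1/2 + x·(e^ε − 1)/(2e^ε + 2), and outputs −(e^ε + 1)/(e^ε − 1) with probability 1/2 − x·(e^ε − 1)/(2e^ε + 2), satisfies ε-LDP (with input domain [−1,1]). -/
import Mathlib


open MeasureTheory

/-- Duchi's mechanism on inputs `x ∈ [−1,1]` with privacy parameter `ε`: it outputs
`(e^ε + 1)/(e^ε − 1)` with probability `1/2 + x·(e^ε − 1)/(2e^ε + 2)` and outputs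
`−(e^ε + 1)/(e^ε − 1)` with probability `1/2 − x·(e^ε − 1)/(2e^ε + 2)`. -/
noncomputable def duchiMechanism (ε x : ℝ) : Measure ℝ :=
  ENNReal.ofReal (1 / 2 + x * (Real.exp ε - 1) / (2 * Real.exp ε + 2)) •
      Measure.dirac ((Real.exp ε + 1) / (Real.exp ε - 1)) +
    ENNReal.ofReal (1 / 2 - x * (Real.exp ε - 1) / (2 * Real.exp ε + 2)) •
      Measure.dirac (-((Real.exp ε + 1) / (Real.exp ε - 1)))

lemma duchi_key (E : ℝ) (hE : 1 < E) {x x' : ℝ} (hx : x ∈ Set.Icc (-1 : ℝ) 1)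
    (hx' : x' ∈ Set.Icc (-1 : ℝ) 1) :
    1 / 2 + x * (E - 1) / (2 * E + 2) ≤ E * (1 / 2 + x' * (E - 1) / (2 * E + 2)) := by
  obtain ⟨h1, h2⟩ := hx
  obtain ⟨h3, h4⟩ := hx'
  have hpos : (0:ℝ) < 2 * E + 2 := by linarith
  rw [mul_div_assoc, mul_div_assoc]
  set t : ℝ := (E - 1) / (2 * E + 2) with ht
  have ht0 : 0 ≤ t := div_nonneg (by linarith) hpos.le
  have heq : 1 / 2 + t = E * (1 / 2 - t) := by
    rw [ht]; field_simp; ring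
  have hxt : x * t ≤ t := by nlinarith
  have hx't : -t ≤ x' * t := by nlinarith
  have hE0 : (0:ℝ) < E := by linarith
  calc 1 / 2 + x * t ≤ 1 / 2 + t := by linarith
    _ = E * (1 / 2 - t) := heq
    _ ≤ E * (1 / 2 + x' * t) := by nlinarith

/-- Duchi's mechanism satisfies `ε`-LDP on the input domain `[−1,1]`: for every pair of
inputs `x, x' ∈ [−1,1]` and every output set `S`,
`Pr[R_Duchi(x) ∈ S] ≤ e^ε · Pr[R_Duchi(x') ∈ S]`. -/
theorem duchi_satisfies_LDP (ε : ℝ) (hε : 0 < ε) :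
    ∀ x ∈ Set.Icc (-1 : ℝ) 1, ∀ x' ∈ Set.Icc (-1 : ℝ) 1, ∀ S : Set ℝ, MeasurableSet S →
      duchiMechanism ε x S ≤ ENNReal.ofReal (Real.exp ε) * duchiMechanism ε x' S := by
  intro x hx x' hx' S hS
  set E := Real.exp ε with hEdef
  have hE : 1 < E := by
    have := Real.add_one_lt_exp hε.ne'
    rw [hEdef]; linarith
  have hneg : ∀ y : ℝ, y ∈ Set.Icc (-1 : ℝ) 1 → -y ∈ Set.Icc (-1 : ℝ) 1 := by
    intro y hy; exact ⟨by linarith [hy.2], by linarith [hy.1]⟩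
  have key1 : ENNReal.ofReal (1 / 2 + x * (E - 1) / (2 * E + 2)) ≤
      ENNReal.ofReal E * ENNReal.ofReal (1 / 2 + x' * (E - 1) / (2 * E + 2)) := by
    rw [← ENNReal.ofReal_mul (by linarith)]
    exact ENNReal.ofReal_le_ofReal (duchi_key E hE hx hx')
  have key2 : ENNReal.ofReal (1 / 2 - x * (E - 1) / (2 * E + 2)) ≤
      ENNReal.ofReal E * ENNReal.ofReal (1 / 2 - x' * (E - 1) / (2 * E + 2)) := by
    rw [← ENNReal.ofReal_mul (by linarith)]
    refine ENNReal.ofReal_le_ofReal ?_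
    have := duchi_key E hE (hneg x hx) (hneg x' hx')
    simpa [sub_eq_add_neg, neg_mul, neg_div] using this
  simp only [duchiMechanism, Measure.add_apply, Measure.smul_apply, smul_eq_mul,
    Measure.dirac_apply' _ hS, mul_add, ← mul_assoc]
  gcongr
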